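/- arXiv:2511.06845 — 2 statements merged into one kernel-verified Lean document; each statement's English description precedes it below -/
import Mathlib

section
/- For a mixed initial state ρ = Σ_μ p_μ |ψ_μ⟩⟨ψ_μ|, the success probability of the generalized Bernstein–Vazirani algorithm Σ_μ p_μ |⟨z| H^{⊗n} O_ℓ |ψ_μ⟩|² equals C_F(ρ) = ⟨η|ρ|η⟩. -/
open Matrix Complex BigOperators Finset

/-! The phase of the oracle `O_ℓ` cancels the phase of row `z` of `H^{⊗n}`, so the amplitude
`⟨z| H^{⊗n} O_ℓ |ψ⟩` is `2^{-n/2} ∑ₓ ψ(x) = ⟨η|ψ⟩`. Hence the success probability on `|ψ⟩` is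
`|⟨η|ψ⟩|² = ⟨η|ψ⟩⟨ψ|η⟩`, and averaging over the ensemble gives `⟨η|ρ|η⟩` by linearity. -/

section Expectation

variable {𝕜 ι α : Type*} [RCLike 𝕜] [Fintype α]

theorem star_dotProduct_vecMulVec_mulVec (η ψ : α → 𝕜) :
    star η ⬝ᵥ vecMulVec ψ (star ψ) *ᵥ η = ((‖star η ⬝ᵥ ψ‖ ^ 2 : ℝ) : 𝕜) := by
  rw [vecMulVec_mulVec, dotProduct_smul, star_dotProduct, RCLike.ofReal_pow,
    ← RCLike.mul_conj]
  rfl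

theorem star_dotProduct_mixture_mulVec [Fintype ι] (p : ι → ℝ) (ψ : ι → α → 𝕜) (η : α → 𝕜) :
    star η ⬝ᵥ (∑ μ, (p μ : 𝕜) • vecMulVec (ψ μ) (star (ψ μ))) *ᵥ η
      = ((∑ μ, p μ * ‖star η ⬝ᵥ ψ μ‖ ^ 2 : ℝ) : 𝕜) := by
  simp only [sum_mulVec, dotProduct_sum, smul_mulVec, dotProduct_smul,
    star_dotProduct_vecMulVec_mulVec, RCLike.ofReal_sum, RCLike.ofReal_mul, smul_eq_mul]

end Expectation

theorem star_const_dotProduct {R α : Type*} [CommSemiring R] [StarRing R] [Fintype α]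
    (c : R) (ψ : α → R) :
    star (fun _ => c : α → R) ⬝ᵥ ψ = star c * ∑ x, ψ x := by
  simp [dotProduct, mul_sum]

theorem neg_one_pow_mul_self {R : Type*} [Monoid R] [HasDistribNeg R] (k : ℕ) :
    (-1 : R) ^ k * (-1) ^ k = 1 :=
  pow_mul_pow_eq_one k (by rw [neg_one_mul, neg_neg])

theorem hadamard_mul_oracle_mulVec_apply {R : Type*} [CommRing R] {n : ℕ} (c : R)
    (z : Fin n → ZMod 2) (ψ : (Fin n → ZMod 2) → R) :
    (((of fun y x => c * (-1) ^ ((∑ i, x i * y i : ZMod 2)).val) *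
        diagonal (fun x => (-1 : R) ^ ((∑ i, z i * x i : ZMod 2)).val)) *ᵥ ψ) z
      = c * ∑ x, ψ x := by
  simp only [mulVec, dotProduct, mul_diagonal, of_apply, mul_sum]
  refine sum_congr rfl fun x _ => ?_
  simp only [mul_comm (x _) (z _)]
  rw [mul_assoc c, neg_one_pow_mul_self, mul_one]

theorem mixed_state_success_prob_general (n m : ℕ) (z : Fin n → ZMod 2) (p : Fin m → ℝ)
    (ψ : Fin m → (Fin n → ZMod 2) → ℂ)
    (Hmat Omat : Matrix (Fin n → ZMod 2) (Fin n → ZMod 2) ℂ)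
    (hH : Hmat = Matrix.of fun y x =>
      ((Real.sqrt (2 ^ n) : ℂ))⁻¹ * (-1) ^ ((∑ i, x i * y i : ZMod 2)).val)
    (hO : Omat = Matrix.diagonal fun x => (-1 : ℂ) ^ ((∑ i, z i * x i : ZMod 2)).val)
    (ρ : Matrix (Fin n → ZMod 2) (Fin n → ZMod 2) ℂ)
    (hρ : ρ = ∑ μ, (p μ : ℂ) • Matrix.vecMulVec (ψ μ) (star (ψ μ)))
    (η : (Fin n → ZMod 2) → ℂ) (hη : η = fun _ => ((Real.sqrt (2 ^ n) : ℂ))⁻¹) :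
    ∑ μ, p μ * ‖(Hmat * Omat).mulVec (ψ μ) z‖ ^ 2
      = (star η ⬝ᵥ ρ.mulVec η).re := by
  have hstar : star ((Real.sqrt (2 ^ n) : ℂ))⁻¹ = ((Real.sqrt (2 ^ n) : ℂ))⁻¹ := by
    rw [← ofReal_inv]
    exact conj_ofReal _
  have hamplitude : ∀ μ, ((Hmat * Omat) *ᵥ ψ μ) z = star η ⬝ᵥ ψ μ := fun μ => by
    rw [hH, hO, hη, hadamard_mul_oracle_mulVec_apply, star_const_dotProduct, hstar]
  simp only [hamplitude, hρ]
  exact ((congrArg re (star_dotProduct_mixture_mulVec p ψ η)).trans (ofReal_re _)).symm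

/-- For a mixed state ρ = ∑ p_μ |ψ_μ⟩⟨ψ_μ|, the GBV success
probability ∑ p_μ |⟨z|H^{⊗n}O_ℓ ψ_μ⟩|² equals C_F(ρ) = ⟨η|ρ|η⟩. -/
theorem mixed_state_success_prob (n m : ℕ) (hn : 1 ≤ n) (z : Fin n → ZMod 2)
    (p : Fin m → ℝ) (hp : ∀ μ, 0 ≤ p μ) (hp1 : ∑ μ, p μ = 1)
    (ψ : Fin m → (Fin n → ZMod 2) → ℂ) (hψ : ∀ μ, ∑ x, ‖ψ μ x‖ ^ 2 = 1)
    (Hmat Omat : Matrix (Fin n → ZMod 2) (Fin n → ZMod 2) ℂ)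
    (hH : Hmat = Matrix.of fun y x =>
      ((Real.sqrt (2 ^ n) : ℂ))⁻¹ * (-1) ^ ((∑ i, x i * y i : ZMod 2)).val)
    (hO : Omat = Matrix.diagonal fun x => (-1 : ℂ) ^ ((∑ i, z i * x i : ZMod 2)).val)
    (ρ : Matrix (Fin n → ZMod 2) (Fin n → ZMod 2) ℂ)
    (hρ : ρ = ∑ μ, (p μ : ℂ) • Matrix.vecMulVec (ψ μ) (star (ψ μ)))
    (η : (Fin n → ZMod 2) → ℂ) (hη : η = fun _ => ((Real.sqrt (2 ^ n) : ℂ))⁻¹) :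
    ∑ μ, p μ * ‖(Hmat * Omat).mulVec (ψ μ) z‖ ^ 2
      = (star η ⬝ᵥ ρ.mulVec η).re :=
  mixed_state_success_prob_general n m z p ψ Hmat Omat hH hO ρ hρ η hη
end

section
/- For a unitary U on C^N, the operator coherence fraction with respect to |0^n⟩, C_F(U|0^n⟩⟨0^n|U†), equals the success probability |⟨z| H^{⊗n} O_ℓ U |0^n⟩|² of the generalized Bernstein–Vazirani algorithm with initializing unitary U. -/
/-!
Writing `ψ = U |0^n⟩`, the coherence fraction is `⟨η|ψ⟩⟨ψ|η⟩ = |⟨η|ψ⟩|²`. On the other side, the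
phase `(-1)^{z·y}` of the oracle cancels the sign of the Hadamard entry in row `z`, so
`⟨z| H^{⊗n} O_ℓ` is the constant row `1/√N`, i.e. `⟨η|`, and the amplitude is again `⟨η|ψ⟩`.
-/

open Matrix

theorem Matrix.mul_vecMulVec_mul_conjTranspose {m n α : Type*} [Fintype m] [Fintype n]
    [CommSemiring α] [StarRing α] (U : Matrix m n α) (v w : n → α) :
    U * vecMulVec v (star w) * Uᴴ = vecMulVec (U *ᵥ v) (star (U *ᵥ w)) := by
  rw [mul_vecMulVec, vecMulVec_mul, star_mulVec]

theorem Matrix.star_dotProduct_vecMulVec_self_mulVec {m 𝕜 : Type*} [Fintype m] [RCLike 𝕜]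
    (ψ η : m → 𝕜) :
    star η ⬝ᵥ vecMulVec ψ (star ψ) *ᵥ η = ((‖star η ⬝ᵥ ψ‖ ^ 2 : ℝ) : 𝕜) := by
  rw [vecMulVec_mulVec, op_smul_eq_smul, dotProduct_smul, star_dotProduct, smul_eq_mul]
  exact_mod_cast RCLike.conj_mul _

theorem neg_one_pow_val_mul_self (a : ZMod 2) : (-1 : ℂ) ^ a.val * (-1) ^ a.val = 1 := by
  rw [← pow_add, ← two_mul, pow_mul, neg_one_sq, one_pow]

theorem hadamard_mul_phaseOracle_row_self {ι : Type*} [Fintype ι] [DecidableEq ι] (c : ℂ)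
    (z : ι → ZMod 2) :
    (of (fun y x : ι → ZMod 2 => c * (-1) ^ (x ⬝ᵥ y).val) *
      diagonal fun x => (-1 : ℂ) ^ (z ⬝ᵥ x).val) z = fun _ => c := by
  funext y
  rw [mul_diagonal, of_apply, dotProduct_comm, mul_assoc, neg_one_pow_val_mul_self, mul_one]

theorem operator_coherence_fraction_eq_success_general (n : ℕ)
    (z : Fin n → ZMod 2)
    (U Hmat Omat : Matrix (Fin n → ZMod 2) (Fin n → ZMod 2) ℂ)
    (hH : Hmat = Matrix.of fun y x =>
      ((Real.sqrt (2 ^ n) : ℂ))⁻¹ * (-1) ^ ((∑ i, x i * y i : ZMod 2)).val)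
    (hO : Omat = Matrix.diagonal fun x => (-1 : ℂ) ^ ((∑ i, z i * x i : ZMod 2)).val)
    (η e0 : (Fin n → ZMod 2) → ℂ)
    (hη : η = fun _ => ((Real.sqrt (2 ^ n) : ℂ))⁻¹) :
    star η ⬝ᵥ (U * Matrix.vecMulVec e0 (star e0) * Uᴴ).mulVec η
      = ((‖(Hmat * Omat * U).mulVec e0 z‖ ^ 2 : ℝ) : ℂ) := by
  have hrow : (Hmat * Omat) z = star η := by
    rw [hH, hO, hη]
    refine (hadamard_mul_phaseOracle_row_self _ z).trans (funext fun _ => ?_)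
    simp [star_inv₀]
  have hamp : ((Hmat * Omat * U) *ᵥ e0) z = star η ⬝ᵥ U *ᵥ e0 := by
    rw [← mulVec_mulVec]
    exact congrArg (· ⬝ᵥ U *ᵥ e0) hrow
  rw [hamp, mul_vecMulVec_mul_conjTranspose]
  exact star_dotProduct_vecMulVec_self_mulVec _ η

/-- The operator coherence fraction of U w.r.t. |0^n⟩,
C_F(U|0^n⟩⟨0^n|U†), equals the GBV success probability |⟨z|H^{⊗n}O_ℓ U|0^n⟩|². -/
theorem operator_coherence_fraction_eq_success (n : ℕ) (hn : 1 ≤ n)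
    (z : Fin n → ZMod 2)
    (U Hmat Omat : Matrix (Fin n → ZMod 2) (Fin n → ZMod 2) ℂ)
    (hU : U ∈ Matrix.unitaryGroup (Fin n → ZMod 2) ℂ)
    (hH : Hmat = Matrix.of fun y x =>
      ((Real.sqrt (2 ^ n) : ℂ))⁻¹ * (-1) ^ ((∑ i, x i * y i : ZMod 2)).val)
    (hO : Omat = Matrix.diagonal fun x => (-1 : ℂ) ^ ((∑ i, z i * x i : ZMod 2)).val)
    (η e0 : (Fin n → ZMod 2) → ℂ)
    (hη : η = fun _ => ((Real.sqrt (2 ^ n) : ℂ))⁻¹)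
    (he0 : e0 = Pi.single 0 1) :
    star η ⬝ᵥ (U * Matrix.vecMulVec e0 (star e0) * Uᴴ).mulVec η
      = ((‖(Hmat * Omat * U).mulVec e0 z‖ ^ 2 : ℝ) : ℂ) :=
  operator_coherence_fraction_eq_success_general n z U Hmat Omat hH hO η e0 hη
end
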